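/- Let X be a geodesic metric space and f : X → Y a weakly H-quasisymmetric homeomorphism into a geodesic metric space Y. For distinct x, a, b ∈ X with t = d_X(x,a)/d_X(x,b) ≤ 1/3, set t' = d_Y(f(x),f(a))/d_Y(f(x),f(b)) and s_0(t) = log(1/t)/log 3. Then t' ≤ 2H/(s_0(t) − 1) whenever s_0(t) > 1; in particular t' → 0 as t → 0. -/

import Mathlib

/-!
Join `f x` to `f b` by a geodesic `γ` of length `D = d(f x, f b)` and pull it back to `X`.
Along the pulled-back path the distance to `x` grows continuously from `0` to `d(x, b)`, so it
passes through `d(x, a), 3 d(x, a), …, 3ⁿ d(x, a)` in order, where `n ≥ s₀(t) − 1`. Between two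
consecutive such points `w, w'` both `x` and `a` are closer to `w` than `w'` is, so weak
quasisymmetry forces `d(f x, f a) ≤ 2H d(f w, f w')`. The `n` pieces of `γ` thus have length at
least `d(f x, f a) / 2H` each, whence `n d(f x, f a) ≤ 2H D`.
-/

open Set

/-- A metric space is geodesic: every pair of points is joined by a geodesic. -/
def IsGeodesicSpace (X : Type*) [MetricSpace X] : Prop :=
  ∀ x y : X, ∃ γ : ℝ → X, γ 0 = x ∧ γ (dist x y) = y ∧
    ∀ s ∈ Set.Icc (0 : ℝ) (dist x y), ∀ t ∈ Set.Icc (0 : ℝ) (dist x y),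
      dist (γ s) (γ t) = |s - t|

def IsWeaklyQuasisymmetric {X Y : Type*} [PseudoMetricSpace X] [PseudoMetricSpace Y]
    (f : X → Y) (H : ℝ) : Prop :=
  ∀ x y z : X, dist x y ≤ dist x z → dist (f x) (f y) ≤ H * dist (f x) (f z)

theorem IsWeaklyQuasisymmetric.dist_le_two_mul_dist_of_three_mul_le
    {X Y : Type*} [PseudoMetricSpace X] [PseudoMetricSpace Y] {f : X → Y} {H : ℝ}
    (hf : IsWeaklyQuasisymmetric f H) {x a w w' : X}
    (ha : dist x a ≤ dist x w) (hw : 3 * dist x w ≤ dist x w') :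
    dist (f x) (f a) ≤ 2 * H * dist (f w) (f w') := by
  have hww' : 2 * dist x w ≤ dist w w' := by linarith [dist_triangle x w w']
  have hx : dist (f w) (f x) ≤ H * dist (f w) (f w') :=
    hf w x w' (by rw [dist_comm]; linarith [dist_nonneg (x := x) (y := w)])
  have ha' : dist (f w) (f a) ≤ H * dist (f w) (f w') :=
    hf w a w' (by linarith [dist_triangle w x a, dist_comm w x])
  linarith [dist_triangle_left (f x) (f a) (f w)]

theorem nat_mul_le_sub_of_continuousOn_of_tripling {g : ℝ → ℝ} {lo hi c δ : ℝ} {n : ℕ}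
    (hlohi : lo ≤ hi) (hg : ContinuousOn g (Icc lo hi)) (hc : 0 ≤ c)
    (hlo : g lo ≤ c) (hhi : 3 ^ n * c ≤ g hi)
    (hstep : ∀ u ∈ Icc lo hi, ∀ u' ∈ Icc lo hi, u ≤ u' → c ≤ g u → g u' = 3 * g u →
      δ ≤ u' - u) :
    n * δ ≤ hi - lo := by
  have hpow : ∀ {i j : ℕ}, i ≤ j → (3 : ℝ) ^ i * c ≤ 3 ^ j * c := fun hij =>
    mul_le_mul_of_nonneg_right (pow_le_pow_right₀ (by norm_num) hij) hc
  have chain : ∀ j ≤ n, ∃ u ∈ Icc lo hi, g u = 3 ^ j * c ∧ lo + j * δ ≤ u := by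
    intro j
    induction j with
    | zero =>
      intro hn
      obtain ⟨u, hu, hgu⟩ := intermediate_value_Icc hlohi hg
        ⟨hlo, by simpa using (hpow hn).trans hhi⟩
      exact ⟨u, hu, by simpa using hgu, by simpa using hu.1⟩
    | succ j ih =>
      intro hj
      obtain ⟨u, hu, hgu, hlou⟩ := ih (by omega)
      obtain ⟨u', hu', hgu'⟩ :=
        intermediate_value_Icc hu.2 (hg.mono (Icc_subset_Icc_left hu.1))
          ⟨hgu ▸ hpow j.le_succ, (hpow hj).trans hhi⟩
      have hu'mem : u' ∈ Icc lo hi := ⟨hu.1.trans hu'.1, hu'.2⟩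
      have hδ := hstep u hu u' hu'mem hu'.1 (by simpa [hgu] using hpow (Nat.zero_le j))
        (by rw [hgu, hgu']; ring)
      exact ⟨u', hu'mem, hgu', by push_cast; linarith⟩
  obtain ⟨u, hu, -, hlou⟩ := chain n le_rfl
  linarith [hu.2]

theorem exists_nat_sub_one_le_and_three_pow_mul_le {d B : ℝ} (hd : 0 < d) (hdB : d ≤ B) :
    ∃ n : ℕ, Real.logb 3 (B / d) - 1 ≤ n ∧ 3 ^ n * d ≤ B := by
  refine ⟨⌊Real.logb 3 (B / d)⌋₊, (Nat.sub_one_lt_floor _).le, ?_⟩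
  have hlog : 0 ≤ Real.logb 3 (B / d) :=
    Real.logb_nonneg (by norm_num) ((one_le_div hd).2 hdB)
  have hpow : (3 : ℝ) ^ ⌊Real.logb 3 (B / d)⌋₊ ≤ B / d := by
    rw [← Real.rpow_natCast,
      ← Real.le_logb_iff_rpow_le (by norm_num) (div_pos (hd.trans_le hdB) hd)]
    exact Nat.floor_le hlog
  rwa [le_div_iff₀ hd] at hpow

theorem IsWeaklyQuasisymmetric.nat_mul_dist_le {X Y : Type*} [MetricSpace X] [MetricSpace Y]
    (hY : IsGeodesicSpace Y) {f : X ≃ₜ Y} {H : ℝ} (hf : IsWeaklyQuasisymmetric f H)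
    (hH : 0 < H) {x a b : X} {n : ℕ} (hn : 3 ^ n * dist x a ≤ dist x b) :
    n * dist (f x) (f a) ≤ 2 * H * dist (f x) (f b) := by
  obtain ⟨γ, hγ0, hγD, hγ⟩ := hY (f x) (f b)
  have hγcont : ContinuousOn γ (Icc 0 (dist (f x) (f b))) :=
    (LipschitzOnWith.of_dist_le' (K := 1) fun u hu v hv => by
      rw [hγ u hu v hv, one_mul, Real.dist_eq]).continuousOn
  have hchain := nat_mul_le_sub_of_continuousOn_of_tripling (g := fun u => dist x (f.symm (γ u)))
    (δ := dist (f x) (f a) / (2 * H)) (n := n) dist_nonneg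
    ((continuous_const.dist f.symm.continuous).comp_continuousOn hγcont) dist_nonneg
    (by simp [hγ0]) (by simpa [hγD] using hn)
    (fun u hu u' hu' huu' hcu hgu' => by
      have key := hf.dist_le_two_mul_dist_of_three_mul_le hcu hgu'.ge
      rw [f.apply_symm_apply, f.apply_symm_apply, hγ u hu u' hu', abs_sub_comm,
        abs_of_nonneg (sub_nonneg.2 huu')] at key
      rwa [div_le_iff₀ (by positivity), mul_comm])
  rw [sub_zero, ← mul_div_assoc, div_le_iff₀ (by positivity)] at hchain
  linarith

theorem weakly_qs_small_ratio_estimate_general {X Y : Type*} [MetricSpace X] [MetricSpace Y]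
    (hY : IsGeodesicSpace Y)
    (f : X ≃ₜ Y) (H : ℝ) (hH : 1 ≤ H)
    (hwqs : ∀ x y z : X, dist x y ≤ dist x z →
      dist (f x) (f y) ≤ H * dist (f x) (f z)) :
    ∀ x a b : X, x ≠ a → x ≠ b → a ≠ b →
      dist x a / dist x b ≤ 1 / 3 →
      1 < Real.log (1 / (dist x a / dist x b)) / Real.log 3 →
      dist (f x) (f a) / dist (f x) (f b) ≤
        2 * H / (Real.log (1 / (dist x a / dist x b)) / Real.log 3 - 1) := by
  intro x a b hxa hxb _ ht hs
  have hd : 0 < dist x a := dist_pos.2 hxa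
  have hB : 0 < dist x b := dist_pos.2 hxb
  have hD : 0 < dist (f x) (f b) := dist_pos.2 (f.injective.ne hxb)
  have hdB : dist x a ≤ dist x b := by
    rw [div_le_iff₀ hB] at ht; linarith
  rw [one_div_div, Real.log_div_log] at hs ⊢
  obtain ⟨n, hsn, hn⟩ := exists_nat_sub_one_le_and_three_pow_mul_le hd hdB
  have hmul := IsWeaklyQuasisymmetric.nat_mul_dist_le hY hwqs (by linarith) hn
  rw [div_le_div_iff₀ hD (by linarith)]
  nlinarith [mul_le_mul_of_nonneg_right hsn (dist_nonneg (x := f x) (y := f a))]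

/-- Small-ratio estimate (Case 2 of Theorem 3.3): if `t = d(x,a)/d(x,b) ≤ 1/3` and
`s₀(t) = log(1/t)/log 3 > 1`, then `t' = d(f x,f a)/d(f x,f b) ≤ 2H/(s₀(t) − 1)`. -/
theorem weakly_qs_small_ratio_estimate {X Y : Type*} [MetricSpace X] [MetricSpace Y]
    (hX : IsGeodesicSpace X) (hY : IsGeodesicSpace Y)
    (f : X ≃ₜ Y) (H : ℝ) (hH : 1 ≤ H)
    (hwqs : ∀ x y z : X, dist x y ≤ dist x z →
      dist (f x) (f y) ≤ H * dist (f x) (f z)) :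
    ∀ x a b : X, x ≠ a → x ≠ b → a ≠ b →
      dist x a / dist x b ≤ 1 / 3 →
      1 < Real.log (1 / (dist x a / dist x b)) / Real.log 3 →
      dist (f x) (f a) / dist (f x) (f b) ≤
        2 * H / (Real.log (1 / (dist x a / dist x b)) / Real.log 3 - 1) :=
  weakly_qs_small_ratio_estimate_general hY f H hH hwqs
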